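/- If α is a locally Lipschitz class K function, h:[0,t_f)→ℝ is continuously differentiable with ḣ(t) ≥ -α(h(t)) for all t, and h(0) > 0, then h(t) > 0 for all t ∈ [0,t_f). -/

import Mathlib

/-!
On a compact time interval `[0, t₀]` the values of `h` stay in a compact set, on which `α` is
Lipschitz with some constant `K`; since `α 0 = 0` this gives `α y ≤ K y` for `y > 0`, so
`ḣ ≥ -K h` wherever `h > 0`. The barrier `h 0 · exp (-(K + 1) t)` then stays below `h`:
at a first touching point its slope is strictly smaller than that of `h`.
-/

open Set

lemma LocallyLipschitz.exists_norm_le_mul_norm_of_isCompact {E F : Type*}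
    [SeminormedAddCommGroup E] [SeminormedAddCommGroup F] {f : E → F}
    (hf : LocallyLipschitz f) (hf0 : f 0 = 0) {s : Set E} (hs : IsCompact s) :
    ∃ K : ℝ, ∀ y ∈ s, ‖f y‖ ≤ K * ‖y‖ := by
  obtain ⟨K, hK⟩ := (hf.locallyLipschitzOn (s := insert 0 s)).exists_lipschitzOnWith_of_compact
    (hs.insert 0)
  refine ⟨K, fun y hy => ?_⟩
  simpa [hf0] using hK.dist_le_mul y (mem_insert_of_mem 0 hy) 0 (mem_insert 0 s)

theorem pos_of_hasDerivWithinAt_ge_neg_mul {f f' : ℝ → ℝ} {a b K : ℝ}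
    (hf : ContinuousOn f (Icc a b)) (hf' : ∀ x ∈ Ico a b, HasDerivWithinAt f (f' x) (Ici x) x)
    (hbound : ∀ x ∈ Ico a b, 0 < f x → -K * f x ≤ f' x) (ha : 0 < f a) :
    ∀ ⦃x⦄, x ∈ Icc a b → 0 < f x := by
  set barrier : ℝ → ℝ := fun t => f a * Real.exp (-(K + 1) * (t - a))
  have hbarrier_pos (t : ℝ) : 0 < barrier t := by positivity
  have hbarrier' (t : ℝ) : HasDerivAt barrier (-(K + 1) * barrier t) t := by
    refine (((hasDerivAt_id t).sub_const a).const_mul (-(K + 1))).exp.const_mul (f a)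
      |>.congr_deriv ?_
    simp only [barrier, id]
    ring
  have hle := image_le_of_deriv_right_lt_deriv_boundary' (f := barrier) (B := f)
    (fun t _ => (hbarrier' t).continuousAt.continuousWithinAt)
    (fun t _ => (hbarrier' t).hasDerivWithinAt) (by simp [barrier]) hf hf' ?_
  · exact fun x hx => (hbarrier_pos x).trans_le (hle hx)
  · intro x hx htouch
    have hf'x := hbound x hx (htouch ▸ hbarrier_pos x)
    rw [← htouch] at hf'x
    linarith [hbarrier_pos x]

theorem stmt1_general
    (tf : EReal)
    (α : ℝ → ℝ)
    (hα_zero : α 0 = 0)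
    (hα_lip : LocallyLipschitz α)
    (h h' : ℝ → ℝ)
    (hderiv : ∀ t : ℝ, 0 ≤ t → (t : EReal) < tf → HasDerivAt h (h' t) t)
    (hineq : ∀ t : ℝ, 0 ≤ t → (t : EReal) < tf → h' t ≥ -α (h t))
    (h0 : h 0 > 0) :
    ∀ t : ℝ, 0 ≤ t → (t : EReal) < tf → h t > 0 := by
  intro t₀ ht₀ ht₀f
  have hdom : ∀ t ∈ Icc 0 t₀, 0 ≤ t ∧ (t : EReal) < tf := fun t ht =>
    ⟨ht.1, (EReal.coe_le_coe_iff.mpr ht.2).trans_lt ht₀f⟩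
  have hderiv₀ : ∀ t ∈ Icc 0 t₀, HasDerivAt h (h' t) t := fun t ht =>
    hderiv t (hdom t ht).1 (hdom t ht).2
  have hcont : ContinuousOn h (Icc 0 t₀) := fun t ht =>
    (hderiv₀ t ht).continuousAt.continuousWithinAt
  obtain ⟨K, hK⟩ := hα_lip.exists_norm_le_mul_norm_of_isCompact hα_zero
    (isCompact_Icc.image_of_continuousOn hcont)
  refine pos_of_hasDerivWithinAt_ge_neg_mul (K := K) hcont
    (fun t ht => (hderiv₀ t (Ico_subset_Icc_self ht)).hasDerivWithinAt) ?_ h0 ⟨ht₀, le_rfl⟩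
  intro t ht hpos
  replace ht := Ico_subset_Icc_self ht
  have hαK : ‖α (h t)‖ ≤ K * ‖h t‖ := hK _ (mem_image_of_mem h ht)
  rw [Real.norm_eq_abs, Real.norm_eq_abs, abs_of_pos hpos] at hαK
  linarith [le_abs_self (α (h t)), hineq t (hdom t ht).1 (hdom t ht).2]

/-- Comparison lemma: if `α` is a locally Lipschitz class-K function and
`h : [0, t_f) → ℝ` is continuously differentiable with `ḣ(t) ≥ -α(h(t))`
on `[0, t_f)` and `h 0 ≥ 0`, then `h t ≥ 0` on `[0, t_f)`.
Here `t_f : EReal` may be `⊤` (infinite horizon). -/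
theorem stmt1
    (tf : EReal) (htf : 0 < tf)
    (α : ℝ → ℝ)
    (hα_cont : Continuous α)
    (hα_mono : StrictMonoOn α (Set.Ici 0))
    (hα_zero : α 0 = 0)
    (hα_lip : LocallyLipschitz α)
    (h h' : ℝ → ℝ)
    (hderiv : ∀ t : ℝ, 0 ≤ t → (t : EReal) < tf → HasDerivAt h (h' t) t)
    (h'cont : ContinuousOn h' {t : ℝ | 0 ≤ t ∧ (t : EReal) < tf})
    (hineq : ∀ t : ℝ, 0 ≤ t → (t : EReal) < tf → h' t ≥ -α (h t))
    (h0 : h 0 > 0) :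
    ∀ t : ℝ, 0 ≤ t → (t : EReal) < tf → h t > 0 :=
  stmt1_general tf α hα_zero hα_lip h h' hderiv hineq h0
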